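/- arXiv:1205.0148 — 6 statements merged into one kernel-verified Lean document; each statement's English description precedes it below -/
import Mathlib

section
/- (Right Hom-Moufang identity) Let (A, μ, α) be a multiplicative right Hom-alternative algebra over a field of characteristic 0. Then for all x, y, z ∈ A: ((xy)α(z))·α²(y) = α²(x)·((yz)α(y)). -/
/-- Right Hom-Moufang identity in a multiplicative right Hom-alternative algebra:
`((xy)α(z))α²(y) = α²(x)((yz)α(y))`. -/
theorem right_homMoufang
    {k A : Type*} [Field k] [CharZero k] [AddCommGroup A] [Module k A]
    (μ : A →ₗ[k] A →ₗ[k] A) (α : A →ₗ[k] A)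
    (hmult : ∀ x y : A, α (μ x y) = μ (α x) (α y))
    (hra : ∀ x y : A, μ (μ x y) (α y) = μ (α x) (μ y y)) :
    ∀ x y z : A,
      μ (μ (μ x y) (α z)) (α (α y)) = μ (α (α x)) (μ (μ y z) (α y)) := by
  have S : ∀ a b c : A,
      μ (μ a b) (α c) + μ (μ a c) (α b) = μ (α a) (μ b c) + μ (α a) (μ c b) := by
    intro a b c
    have h := hra a (b + c)
    have h1 := hra a b
    have h2 := hra a c
    simp only [map_add, LinearMap.add_apply] at h
    linear_combination (norm := module) h - h1 - h2
  intro x y z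
  have T1 := S (μ x y) (α y) (α z)
  have T2 := S (μ x z) (α y) (α y)
  have T3 := S (α x) (μ y z) (α y)
  have T4 := S (α x) (μ z y) (α y)
  have T5 := S (α x) (μ y y) (α z)
  simp only [hmult] at T1 T2 T3 T4 T5
  have P1 := congrArg (fun t => μ t (α (α z))) (S x y y)
  have P2 := congrArg (fun t => μ t (α (α y))) (S x y z)
  have P3 := congrArg (fun t => μ (α (α x)) t) (S y y z)
  have P4 := congrArg (fun t => μ (α (α x)) t) (S z y y)
  simp only [map_add, LinearMap.add_apply] at P1 P2 P3 P4
  linear_combination (norm := module)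
    ((1:k)/2) • T1 - ((1:k)/4) • T2 + ((1:k)/2) • T3 + ((1:k)/2) • T4
      - ((1:k)/2) • T5 - ((1:k)/4) • P1 + ((1:k)/2) • P2
      - ((1:k)/2) • P3 + ((1:k)/4) • P4
end

section
/- Let (A, μ, α) be a multiplicative right Hom-alternative algebra over a field of characteristic 0. Then for all x, y, z ∈ A: (α(x), α(y), yz) = (x,y,z)·α²(y), where (,,) denotes the Hom-associator. -/
/-- In a multiplicative right Hom-alternative algebra:
`(α(x), α(y), yz) = (x,y,z)·α²(y)`, where `(,,)` is the Hom-associator. -/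
theorem homAssociator_identity
    {k A : Type*} [Field k] [CharZero k] [AddCommGroup A] [Module k A]
    (μ : A →ₗ[k] A →ₗ[k] A) (α : A →ₗ[k] A)
    (hmult : ∀ x y : A, α (μ x y) = μ (α x) (α y))
    (hra : ∀ x y : A, μ (μ x y) (α y) = μ (α x) (μ y y)) :
    ∀ x y z : A,
      μ (μ (α x) (α y)) (α (μ y z)) - μ (α (α x)) (μ (α y) (μ y z)) =
        μ (μ (μ x y) (α z) - μ (α x) (μ y z)) (α (α y)) := by
  have cancel : ∀ u v : A, u + u = v + v → u = v := by
    intro u v h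
    have h2 : (2:k) • u = (2:k) • v := by rw [two_smul, two_smul]; exact h
    exact smul_right_injective A two_ne_zero h2
  have hG : ∀ a b : A,
      μ (μ (α a) (α b)) (μ (α b) (α b)) = μ (α (α a)) (μ (α b) (μ b b)) := by
    intro a b
    have h1 := hra (α a) (α b + μ b b)
    have h2 := hra (α a) (α b)
    have h3 := hra (α a) (μ b b)
    have h4 := hra (μ a b) (α b)
    have h5 := congrArg (fun w => μ w (α (α b))) (hra a b)
    have h6 := congrArg (fun w => μ (α (α a)) w) (hra b b)
    simp only [map_add, LinearMap.add_apply, hmult] at h1 h2 h3 h4 h5 h6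
    apply cancel
    linear_combination (norm := module) h1 - h2 - h3 - h4 + h5 + h6
  have hB : ∀ a b c : A,
      μ (μ (α a) (α b)) (μ (α b) (α c)) + μ (μ (α a) (α b)) (μ (α c) (α b)) +
        μ (μ (α a) (α c)) (μ (α b) (α b)) =
      μ (α (α a)) (μ (α b) (μ b c)) + μ (α (α a)) (μ (α b) (μ c b)) +
        μ (α (α a)) (μ (α c) (μ b b)) := by
    intro a b c
    have h1 := hG a (b + c)
    have h2 := hG a (b - c)
    have h3 := hG a c
    simp only [map_add, map_sub, LinearMap.add_apply, LinearMap.sub_apply, hmult] at h1 h2 h3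
    apply cancel
    linear_combination (norm := module) h1 - h2 - (2:k) • h3
  intro x y z
  have m1 := hra (μ x y) (α y + α z)
  have m2 := hra (μ x y) (α y)
  have m3 := hra (μ x y) (α z)
  have m4 := congrArg (fun w => μ w (α (α z))) (hra x y)
  have m5 := hra (α x) (α y + μ y z)
  have m6 := hra (α x) (α z + μ y y)
  have m7 := hra (α x) (α y)
  have m8 := hra (α x) (α z)
  have m9 := hra (α x) (μ y z)
  have m10 := hra (α x) (μ y y)
  have m11 := congrArg (fun w => μ (α (α x)) w) (hra y (y + z))
  have m12 := congrArg (fun w => μ (α (α x)) w) (hra y y)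
  have m13 := congrArg (fun w => μ (α (α x)) w) (hra y z)
  have m14 := hB x y z
  simp only [map_add, map_sub, LinearMap.add_apply, LinearMap.sub_apply, hmult] at m1 m2 m3 m4 m5 m6 m7 m8 m9 m10 m11 m12 m13 m14 ⊢
  linear_combination (norm := module) m2 + m3 + m4 + m5 + m6 + m11 -
    (m1 + m7 + m8 + m9 + m10 + m12 + m13 + m14)
end

section
/- (Linearized right Hom-Moufang identity) Let (A, μ, α) be a multiplicative right Hom-alternative algebra over a field of characteristic 0. Then for all x, a, b, c ∈ A: ((xa)α(b))·α²(c) + ((xc)α(b))·α²(a) = α²(x)·((ab)α(c) + (cb)α(a)). -/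
/-- Linearized right Hom-Moufang identity in a multiplicative right
Hom-alternative algebra:
`((xa)α(b))α²(c) + ((xc)α(b))α²(a) = α²(x)((ab)α(c) + (cb)α(a))`. -/
theorem right_homMoufang_linearized
    {k A : Type*} [Field k] [CharZero k] [AddCommGroup A] [Module k A]
    (μ : A →ₗ[k] A →ₗ[k] A) (α : A →ₗ[k] A)
    (hmult : ∀ x y : A, α (μ x y) = μ (α x) (α y))
    (hra : ∀ x y : A, μ (μ x y) (α y) = μ (α x) (μ y y)) :
    ∀ x a b c : A,
      μ (μ (μ x a) (α b)) (α (α c)) + μ (μ (μ x c) (α b)) (α (α a)) =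
        μ (α (α x)) (μ (μ a b) (α c) + μ (μ c b) (α a)) := by
  intro x a b c
  have lin : ∀ u v w : A, μ (μ u v) (α w) + μ (μ u w) (α v)
      = μ (α u) (μ v w) + μ (α u) (μ w v) := by
    intro u v w
    have h := hra u (v + w)
    simp only [map_add, LinearMap.add_apply] at h
    rw [hra u v, hra u w] at h
    rw [← sub_eq_zero, ← sub_eq_zero_of_eq h]
    abel
  have h0 : (μ ((μ ((μ (x) (a))) (α b))) (α (α c))) + (μ ((μ ((μ (x) (a))) (α c))) (α (α b))) = (μ ((μ (α x) (α a))) ((μ (α b) (α c)))) + (μ ((μ (α x) (α a))) ((μ (α c) (α b)))) := by have h := lin ((μ (x) (a))) (α b) (α c); simp only [hmult] at h; exact h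
  have z0 := sub_eq_zero_of_eq h0
  have h1 : (μ ((μ ((μ (x) (b))) (α a))) (α (α c))) + (μ ((μ ((μ (x) (b))) (α c))) (α (α a))) = (μ ((μ (α x) (α b))) ((μ (α a) (α c)))) + (μ ((μ (α x) (α b))) ((μ (α c) (α a)))) := by have h := lin ((μ (x) (b))) (α a) (α c); simp only [hmult] at h; exact h
  have z1 := sub_eq_zero_of_eq h1
  have h2 : (μ ((μ ((μ (x) (c))) (α a))) (α (α b))) + (μ ((μ ((μ (x) (c))) (α b))) (α (α a))) = (μ ((μ (α x) (α c))) ((μ (α a) (α b)))) + (μ ((μ (α x) (α c))) ((μ (α b) (α a)))) := by have h := lin ((μ (x) (c))) (α a) (α b); simp only [hmult] at h; exact h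
  have z2 := sub_eq_zero_of_eq h2
  have h3 : (μ ((μ (α x) ((μ (a) (b))))) (α (α c))) + (μ ((μ (α x) (α c))) ((μ (α a) (α b)))) = (μ (α (α x)) ((μ ((μ (a) (b))) (α c)))) + (μ (α (α x)) ((μ (α c) ((μ (a) (b)))))) := by have h := lin (α x) ((μ (a) (b))) (α c); simp only [hmult] at h; exact h
  have z3 := sub_eq_zero_of_eq h3
  have h4 : (μ ((μ (α x) ((μ (a) (c))))) (α (α b))) + (μ ((μ (α x) (α b))) ((μ (α a) (α c)))) = (μ (α (α x)) ((μ ((μ (a) (c))) (α b)))) + (μ (α (α x)) ((μ (α b) ((μ (a) (c)))))) := by have h := lin (α x) ((μ (a) (c))) (α b); simp only [hmult] at h; exact h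
  have z4 := sub_eq_zero_of_eq h4
  have h5 : (μ ((μ (α x) ((μ (b) (a))))) (α (α c))) + (μ ((μ (α x) (α c))) ((μ (α b) (α a)))) = (μ (α (α x)) ((μ ((μ (b) (a))) (α c)))) + (μ (α (α x)) ((μ (α c) ((μ (b) (a)))))) := by have h := lin (α x) ((μ (b) (a))) (α c); simp only [hmult] at h; exact h
  have z5 := sub_eq_zero_of_eq h5
  have h6 : (μ ((μ (α x) ((μ (b) (c))))) (α (α a))) + (μ ((μ (α x) (α a))) ((μ (α b) (α c)))) = (μ (α (α x)) ((μ ((μ (b) (c))) (α a)))) + (μ (α (α x)) ((μ (α a) ((μ (b) (c)))))) := by have h := lin (α x) ((μ (b) (c))) (α a); simp only [hmult] at h; exact h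
  have z6 := sub_eq_zero_of_eq h6
  have h7 : (μ ((μ (α x) ((μ (c) (a))))) (α (α b))) + (μ ((μ (α x) (α b))) ((μ (α c) (α a)))) = (μ (α (α x)) ((μ ((μ (c) (a))) (α b)))) + (μ (α (α x)) ((μ (α b) ((μ (c) (a)))))) := by have h := lin (α x) ((μ (c) (a))) (α b); simp only [hmult] at h; exact h
  have z7 := sub_eq_zero_of_eq h7
  have h8 : (μ ((μ (α x) ((μ (c) (b))))) (α (α a))) + (μ ((μ (α x) (α a))) ((μ (α c) (α b)))) = (μ (α (α x)) ((μ ((μ (c) (b))) (α a)))) + (μ (α (α x)) ((μ (α a) ((μ (c) (b)))))) := by have h := lin (α x) ((μ (c) (b))) (α a); simp only [hmult] at h; exact h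
  have z8 := sub_eq_zero_of_eq h8
  have h9 : (μ (α (α x)) ((μ ((μ (a) (b))) (α c)))) + (μ (α (α x)) ((μ ((μ (a) (c))) (α b)))) = (μ (α (α x)) ((μ (α a) ((μ (b) (c)))))) + (μ (α (α x)) ((μ (α a) ((μ (c) (b)))))) := by have h := congrArg (fun t => μ (α (α x)) t) (lin a b c); simp only [map_add] at h; exact h
  have z9 := sub_eq_zero_of_eq h9
  have h10 : (μ (α (α x)) ((μ ((μ (b) (a))) (α c)))) + (μ (α (α x)) ((μ ((μ (b) (c))) (α a)))) = (μ (α (α x)) ((μ (α b) ((μ (a) (c)))))) + (μ (α (α x)) ((μ (α b) ((μ (c) (a)))))) := by have h := congrArg (fun t => μ (α (α x)) t) (lin b a c); simp only [map_add] at h; exact h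
  have z10 := sub_eq_zero_of_eq h10
  have h11 : (μ (α (α x)) ((μ ((μ (c) (a))) (α b)))) + (μ (α (α x)) ((μ ((μ (c) (b))) (α a)))) = (μ (α (α x)) ((μ (α c) ((μ (a) (b)))))) + (μ (α (α x)) ((μ (α c) ((μ (b) (a)))))) := by have h := congrArg (fun t => μ (α (α x)) t) (lin c a b); simp only [map_add] at h; exact h
  have z11 := sub_eq_zero_of_eq h11
  have h12 : (μ ((μ ((μ (x) (b))) (α c))) (α (α a))) + (μ ((μ ((μ (x) (c))) (α b))) (α (α a))) = (μ ((μ (α x) ((μ (b) (c))))) (α (α a))) + (μ ((μ (α x) ((μ (c) (b))))) (α (α a))) := by have h := congrArg (fun t => μ t (α (α a))) (lin x b c); simp only [map_add, LinearMap.add_apply] at h; exact h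
  have z12 := sub_eq_zero_of_eq h12
  have h13 : (μ ((μ ((μ (x) (a))) (α c))) (α (α b))) + (μ ((μ ((μ (x) (c))) (α a))) (α (α b))) = (μ ((μ (α x) ((μ (a) (c))))) (α (α b))) + (μ ((μ (α x) ((μ (c) (a))))) (α (α b))) := by have h := congrArg (fun t => μ t (α (α b))) (lin x a c); simp only [map_add, LinearMap.add_apply] at h; exact h
  have z13 := sub_eq_zero_of_eq h13
  have h14 : (μ ((μ ((μ (x) (a))) (α b))) (α (α c))) + (μ ((μ ((μ (x) (b))) (α a))) (α (α c))) = (μ ((μ (α x) ((μ (a) (b))))) (α (α c))) + (μ ((μ (α x) ((μ (b) (a))))) (α (α c))) := by have h := congrArg (fun t => μ t (α (α c))) (lin x a b); simp only [map_add, LinearMap.add_apply] at h; exact h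
  have z14 := sub_eq_zero_of_eq h14
  rw [map_add]
  rw [← sub_eq_zero]
  have key : μ (μ (μ x a) (α b)) (α (α c)) + μ (μ (μ x c) (α b)) (α (α a)) - (μ (α (α x)) (μ (μ a b) (α c)) + μ (α (α x)) (μ (μ c b) (α a))) = ((1:k)/2) • ((μ ((μ ((μ (x) (a))) (α b))) (α (α c))) + (μ ((μ ((μ (x) (a))) (α c))) (α (α b))) - ((μ ((μ (α x) (α a))) ((μ (α b) (α c)))) + (μ ((μ (α x) (α a))) ((μ (α c) (α b)))))) - ((1:k)/2) • ((μ ((μ ((μ (x) (b))) (α a))) (α (α c))) + (μ ((μ ((μ (x) (b))) (α c))) (α (α a))) - ((μ ((μ (α x) (α b))) ((μ (α a) (α c)))) + (μ ((μ (α x) (α b))) ((μ (α c) (α a)))))) + ((1:k)/2) • ((μ ((μ ((μ (x) (c))) (α a))) (α (α b))) + (μ ((μ ((μ (x) (c))) (α b))) (α (α a))) - ((μ ((μ (α x) (α c))) ((μ (α a) (α b)))) + (μ ((μ (α x) (α c))) ((μ (α b) (α a)))))) + ((1:k)/2) • ((μ ((μ (α x) ((μ (a) (b))))) (α (α c)))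 + (μ ((μ (α x) (α c))) ((μ (α a) (α b)))) - ((μ (α (α x)) ((μ ((μ (a) (b))) (α c)))) + (μ (α (α x)) ((μ (α c) ((μ (a) (b)))))))) - ((1:k)/2) • ((μ ((μ (α x) ((μ (a) (c))))) (α (α b))) + (μ ((μ (α x) (α b))) ((μ (α a) (α c)))) - ((μ (α (α x)) ((μ ((μ (a) (c))) (α b)))) + (μ (α (α x)) ((μ (α b) ((μ (a) (c)))))))) + ((1:k)/2) • ((μ ((μ (α x) ((μ (b) (a))))) (α (α c))) + (μ ((μ (α x) (α c))) ((μ (α b) (α a)))) - ((μ (α (α x)) ((μ ((μ (b) (a))) (α c)))) + (μ (α (α x)) ((μ (α c) ((μ (b) (a)))))))) + ((1:k)/2) • ((μ ((μ (α x) ((μ (b) (c))))) (α (α a))) + (μ ((μ (α x) (α a))) ((μ (α b) (α c)))) - ((μ (α (α x)) ((μ ((μ (b) (c))) (α a)))) + (μ (α (α x)) ((μ (α a) ((μ (b) (c)))))))) - ((1:k)/2) • ((μ ((μ (α x) ((μ (c) (a))))) (α (α b))) + (μ ((μ (α x) (α b))) ((μ (α c) (α a)))) - ((μ (α (α x)) ((μ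 ((μ (c) (a))) (α b)))) + (μ (α (α x)) ((μ (α b) ((μ (c) (a)))))))) + ((1:k)/2) • ((μ ((μ (α x) ((μ (c) (b))))) (α (α a))) + (μ ((μ (α x) (α a))) ((μ (α c) (α b)))) - ((μ (α (α x)) ((μ ((μ (c) (b))) (α a)))) + (μ (α (α x)) ((μ (α a) ((μ (c) (b)))))))) - ((1:k)/2) • ((μ (α (α x)) ((μ ((μ (a) (b))) (α c)))) + (μ (α (α x)) ((μ ((μ (a) (c))) (α b)))) - ((μ (α (α x)) ((μ (α a) ((μ (b) (c)))))) + (μ (α (α x)) ((μ (α a) ((μ (c) (b)))))))) + ((1:k)/2) • ((μ (α (α x)) ((μ ((μ (b) (a))) (α c)))) + (μ (α (α x)) ((μ ((μ (b) (c))) (α a)))) - ((μ (α (α x)) ((μ (α b) ((μ (a) (c)))))) + (μ (α (α x)) ((μ (α b) ((μ (c) (a)))))))) - ((1:k)/2) • ((μ (α (α x)) ((μ ((μ (c) (a))) (α b)))) + (μ (α (α x)) ((μ ((μ (c) (b))) (α a)))) - ((μ (α (α x)) ((μ (α c) ((μ (a) (b)))))) + (μ (α (α x)) ((μ (α c) ((μ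 (b) (a)))))))) + ((1:k)/2) • ((μ ((μ ((μ (x) (b))) (α c))) (α (α a))) + (μ ((μ ((μ (x) (c))) (α b))) (α (α a))) - ((μ ((μ (α x) ((μ (b) (c))))) (α (α a))) + (μ ((μ (α x) ((μ (c) (b))))) (α (α a))))) - ((1:k)/2) • ((μ ((μ ((μ (x) (a))) (α c))) (α (α b))) + (μ ((μ ((μ (x) (c))) (α a))) (α (α b))) - ((μ ((μ (α x) ((μ (a) (c))))) (α (α b))) + (μ ((μ (α x) ((μ (c) (a))))) (α (α b))))) + ((1:k)/2) • ((μ ((μ ((μ (x) (a))) (α b))) (α (α c))) + (μ ((μ ((μ (x) (b))) (α a))) (α (α c))) - ((μ ((μ (α x) ((μ (a) (b))))) (α (α c))) + (μ ((μ (α x) ((μ (b) (a))))) (α (α c))))) := by module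
  rw [key, z0, z1, z2, z3, z4, z5, z6, z7, z8, z9, z10, z11, z12, z13, z14]
  simp
end

section
/- Let (A, μ, α) be a right Hom-alternative algebra over a field of characteristic 0, and let β : A → A be a linear map with β(xy) = β(x)β(y) for all x, y (a weak morphism). Then the Hom-algebra A_β = (A, μ_β, β∘α) with multiplication μ_β(x,y) = β(xy) is also right Hom-alternative, i.e., β(β(xy)·(βα)(y)) = β((βα)(x)·β(yy)) for all x, y. Moreover, if A is multiplicative and β additionally satisfies β∘α = α∘β, then A_β is multiplicative. -/
/-- Twisting a right Hom-alternative algebra by a weak morphism `β` gives a right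
Hom-alternative algebra `A_β = (A, β∘μ, β∘α)`; moreover, if `A` is multiplicative
and `β` is a morphism, then `A_β` is multiplicative. -/
theorem right_homAlternative_twist
    {k A : Type*} [Field k] [CharZero k] [AddCommGroup A] [Module k A]
    (μ : A →ₗ[k] A →ₗ[k] A) (α : A →ₗ[k] A) (β : A →ₗ[k] A)
    (hra : ∀ x y : A, μ (μ x y) (α y) = μ (α x) (μ y y))
    (hβ : ∀ x y : A, β (μ x y) = μ (β x) (β y)) :
    (∀ x y : A, β (μ (β (μ x y)) (β (α y))) = β (μ (β (α x)) (β (μ y y)))) ∧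
      ((∀ x y : A, α (μ x y) = μ (α x) (α y)) →
        (∀ x : A, β (α x) = α (β x)) →
        ∀ x y : A, β (α (β (μ x y))) = β (μ (β (α x)) (β (α y)))) := by
  refine ⟨fun x y => ?_, fun hm hc x y => ?_⟩
  · rw [← hβ, ← hβ, hra]
  · simp only [hc]; rw [← hm, ← hβ, hc]
end

section
/- Let (A, μ) be a right alternative algebra over a field of characteristic 0, i.e., (ab)b = a(bb) for all a, b, and let β : A → A be an algebra morphism (linear with β(xy) = β(x)β(y)). Then the Hom-algebra A_β = (A, β∘μ, β) is a multiplicative right Hom-alternative algebra: β is multiplicative with respect to β∘μ, and β(β(xy)·β(y)) = β(β(x)·β(yy)) for all x, y. -/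
/-- Twisting a right alternative algebra by an algebra morphism `β` gives a
multiplicative right Hom-alternative algebra `A_β = (A, β∘μ, β)`. -/
theorem right_alternative_twist
    {k A : Type*} [Field k] [CharZero k] [AddCommGroup A] [Module k A]
    (μ : A →ₗ[k] A →ₗ[k] A) (β : A →ₗ[k] A)
    (hra : ∀ a b : A, μ (μ a b) b = μ a (μ b b))
    (hβ : ∀ x y : A, β (μ x y) = μ (β x) (β y)) :
    (∀ x y : A, β (β (μ x y)) = β (μ (β x) (β y))) ∧
      (∀ x y : A, β (μ (β (μ x y)) (β y)) = β (μ (β x) (β (μ y y)))) := by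
  constructor
  · intro x y; rw [hβ]
  · intro x y; rw [hβ x y, hβ y y, hra]
end

section
/- Let (A, μ, α) be a multiplicative right Hom-alternative algebra over a field of characteristic 0. Then for all x, a, b ∈ A, setting y = α(x)(ab) − (xa)α(b), one has α(y)·(α²(a)·α²(b)) − (y·α²(b))·α³(a) = 0. -/
/-- In a multiplicative right Hom-alternative algebra, with
`y = α(x)(ab) − (xa)α(b)`, one has `α(y)·(α²(a)·α²(b)) − (y·α²(b))·α³(a) = 0`. -/
theorem hom_operator_identity_xab
    {k A : Type*} [Field k] [CharZero k] [AddCommGroup A] [Module k A]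
    (μ : A →ₗ[k] A →ₗ[k] A) (α : A →ₗ[k] A)
    (hmult : ∀ x y : A, α (μ x y) = μ (α x) (α y))
    (hra : ∀ x y : A, μ (μ x y) (α y) = μ (α x) (μ y y)) :
    ∀ x a b : A,
      let y : A := μ (α x) (μ a b) - μ (μ x a) (α b)
      μ (α y) (μ ((α^2 : A →ₗ[k] A) a) ((α^2 : A →ₗ[k] A) b))
        - μ (μ y ((α^2 : A →ₗ[k] A) b)) ((α^3 : A →ₗ[k] A) a) = 0 := by
  intro x a b
  have L : ∀ u v w : A, μ (μ u v) (α w) + μ (μ u w) (α v)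
      = μ (α u) (μ v w) + μ (α u) (μ w v) := by
    intro u v w
    have h := hra u (v + w)
    have hv := hra u v
    have hw := hra u w
    simp only [map_add, LinearMap.add_apply] at h
    linear_combination (norm := module) h - hv - hw
  show μ (α (μ (α x) (μ a b) - μ (μ x a) (α b)))
        (μ ((α^2 : A →ₗ[k] A) a) ((α^2 : A →ₗ[k] A) b))
      - μ (μ (μ (α x) (μ a b) - μ (μ x a) (α b)) ((α^2 : A →ₗ[k] A) b))
        ((α^3 : A →ₗ[k] A) a) = 0
  have h0 := congrArg (fun t : A => (μ (α (α (α x))) (μ t (α (α a))))) (L a b b)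
  have h1 := congrArg (fun t : A => (μ (α (α (α x))) (μ (α (α a)) t))) (L a b b)
  have h2 := congrArg (fun t : A => (μ (μ (α (α x)) t) (α (α (α a))))) (L a b b)
  have h3 := congrArg (fun t : A => (μ (μ (α (α x)) (α (α a))) t)) (L (α a) (α b) (α b))
  have h4 := congrArg (fun t : A => (μ (α (α (α x))) (μ t (α (α b))))) (L a b a)
  have h5 := congrArg (fun t : A => (μ (α (α (α x))) (μ (α (α b)) t))) (L a b a)
  have h6 := congrArg (fun t : A => (μ (μ (α (α x)) t) (α (α (α b))))) (L a b a)
  have h7 := congrArg (fun t : A => (μ (μ (α (α x)) (α (α b))) t)) (L (α a) (α b) (α a))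
  have h8 := congrArg (fun t : A => (μ (α (α (α x))) t)) (L (α b) (α a) (μ a b))
  have h9 := congrArg (fun t : A => (μ (α (α (α x))) t)) (L (μ b b) (α a) (α a))
  have h10 := congrArg (fun t : A => (μ (α (α (α x))) t)) (L (α a) (α b) (μ a b))
  have h11 := congrArg (fun t : A => (μ (α (α (α x))) t)) (L (α a) (μ b b) (α a))
  have h12 := congrArg (fun t : A => (μ (α (α (α x))) t)) (L (μ a b) (α b) (α a))
  have h13 := congrArg (fun t : A => (μ t (μ (α (α a)) (α (α b))))) (L (α x) (α b) (α a))
  have h14 := congrArg (fun t : A => (μ t (α (α (α a))))) (L (α x) (α b) (μ a b))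
  have h15 := congrArg (fun t : A => (μ t (α (α (α a))))) (L (α x) (μ b b) (α a))
  have h16 := congrArg (fun t : A => (μ t (α (α (α a))))) (L (μ x a) (α b) (α b))
  have h17 := congrArg (fun t : A => (μ t (μ (α (α b)) (α (α b))))) (L (α x) (α a) (α a))
  have h18 := congrArg (fun t : A => (μ t (α (α (α b))))) (L (α x) (α a) (μ a b))
  have h19 := L (α (α x)) (α (α b)) (μ (α a) (μ a b))
  have h20 := L (α (α x)) (α (α b)) (μ (μ a a) (α b))
  have h21 := L (α (α x)) (α (α b)) (μ (α a) (μ b a))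
  have h22 := L (α (α x)) (μ (α b) (α b)) (μ (α a) (α a))
  have h23 := L (α (α x)) (α (α a)) (μ (μ b b) (α a))
  have h24 := L (α (α x)) (α (α a)) (μ (α b) (μ a b))
  have h25 := L (α (α x)) (μ (α b) (α a)) (μ (α a) (α b))
  have h26 := L (μ (α x) (α b)) (α (α a)) (μ (α a) (α b))
  have h27 := L (μ (α x) (μ b b)) (α (α a)) (α (α a))
  have h28 := L (μ (α x) (α a)) (α (α b)) (μ (α a) (α b))
  have h29 := L (μ (α x) (α a)) (μ (α b) (α b)) (α (α a))
  have h30 := L (μ (α x) (μ a b)) (α (α b)) (α (α a))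
  simp only [map_add, LinearMap.add_apply] at h0 h1 h2 h3 h4 h5 h6 h7 h8 h9 h10 h11 h12 h13 h14 h15 h16 h17 h18 h19 h20 h21 h22 h23 h24 h25 h26 h27 h28 h29 h30
  simp only [hmult] at h0 h1 h2 h3 h4 h5 h6 h7 h8 h9 h10 h11 h12 h13 h14 h15 h16 h17 h18 h19 h20 h21 h22 h23 h24 h25 h26 h27 h28 h29 h30
  simp only [pow_succ, pow_zero, pow_one, Module.End.mul_apply, Module.End.one_apply, map_sub, LinearMap.sub_apply, hmult]
  linear_combination (norm := module) ((-1:k)/4) • h0 + ((1:k)/4) • h1 + ((-1:k)/4) • h2 + ((-1:k)/4) • h3 + ((-2:k)/4) • h4 + ((-2:k)/4) • h5 + ((2:k)/4) • h6 + ((2:k)/4) • h7 + ((-2:k)/4) • h8 + ((1:k)/4) • h9 + ((2:k)/4) • h10 + ((-2:k)/4) • h11 + ((2:k)/4) • h12 + ((-2:k)/4) • h13 + ((-2:k)/4) • h14 + ((2:k)/4) • h15 + ((2:k)/4) • h16 + ((-1:k)/4) • h17 + ((2:k)/4) • h18 + ((4:k)/4) • h19 + ((-2:k)/4) • h20 +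 ((2:k)/4) • h21 + ((-2:k)/4) • h22 + ((2:k)/4) • h23 + ((-2:k)/4) • h24 + ((-2:k)/4) • h25 + ((2:k)/4) • h26 + ((-1:k)/4) • h27 + ((-2:k)/4) • h28 + ((2:k)/4) • h29 + ((-2:k)/4) • h30
end
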